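/- arXiv:2406.11379 — 2 statements merged into one kernel-verified Lean document; each statement's English description precedes it below -/
import Mathlib

section
/- There exists a constant C > 0 such that for every α > 0 and every x = (x₁,x₂) ∈ ℝ²₊, one has ∫_{{y ∈ ℝ²₊ : y₂ ≤ α}} G(x,y) dy ≤ C·x₂^{1/2}·α^{3/2}. -/
open MeasureTheory Real Set NNReal Filter Topology

noncomputable section

/-- The upper half plane `ℝ²₊`. -/
def H : Set (ℝ × ℝ) := {p | 0 < p.2}

/-- The half-plane Green function
`G(x,y) = (1/(4π)) log(1 + 4 x₂ y₂ / |x-y|²)` (Euclidean distance). -/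
def G (x y : ℝ × ℝ) : ℝ :=
  (1 / (4 * π)) * Real.log (1 + 4 * x.2 * y.2 / ((x.1 - y.1) ^ 2 + (x.2 - y.2) ^ 2))

/-- The potential `𝒢[ω](x) = ∫_{ℝ²₊} G(x,y) ω(y) dy`. -/
def Gpot (ω : ℝ × ℝ → ℝ) (x : ℝ × ℝ) : ℝ := ∫ y in H, G x y * ω y

/-- The kinetic energy `E(ω) = (1/2) ∫∫ G(x,y) ω(x) ω(y) dy dx`. -/
def energy (ω : ℝ × ℝ → ℝ) : ℝ :=
  (1 / 2) * ∫ x in H, ∫ y in H, G x y * ω x * ω y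

/-- The `L¹(ℝ²₊)` norm (mass). -/
def norm1 (ω : ℝ × ℝ → ℝ) : ℝ := ∫ x in H, |ω x|

/-- The `L²(ℝ²₊)` norm. -/
def norm2 (ω : ℝ × ℝ → ℝ) : ℝ := (∫ x in H, ω x ^ 2) ^ ((1 : ℝ) / 2)

/-- The impulse `‖x₂ ω‖₁ = ∫_{ℝ²₊} x₂ |ω(x)| dx`. -/
def impulse (ω : ℝ × ℝ → ℝ) : ℝ := ∫ x in H, x.2 * |ω x|

/-- `ω ∈ (L¹ ∩ L²)(ℝ²₊)`. -/
def MemL1L2 (ω : ℝ × ℝ → ℝ) : Prop :=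
  Integrable ω (volume.restrict H) ∧ Integrable (fun x => ω x ^ 2) (volume.restrict H)

/-- Finiteness of the impulse `‖x₂ ω‖₁ < ∞`. -/
def ImpulseFinite (ω : ℝ × ℝ → ℝ) : Prop :=
  Integrable (fun x : ℝ × ℝ => x.2 * |ω x|) (volume.restrict H)

/-- The admissible class `K_M`: patches `ω = 1_A` a.e. on `ℝ²₊` with
impulse `∫_A x₂ = M` and mass `|A| ≤ 1`. -/
def memK (M : ℝ) (ω : ℝ × ℝ → ℝ) : Prop :=
  Integrable ω (volume.restrict H) ∧
  ∃ A : Set (ℝ × ℝ), A ⊆ H ∧ MeasurableSet A ∧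
    (∀ᵐ x ∂volume.restrict H, ω x = A.indicator (fun _ => (1 : ℝ)) x) ∧
    (∫ x in A, x.2) = M ∧ volume A ≤ 1

/-- The admissible class `K_{M,∞}`: patches `ω = 1_A` a.e. on `ℝ²₊` with
impulse `∫_A x₂ = M`, without any mass bound. -/
def memKinf (M : ℝ) (ω : ℝ × ℝ → ℝ) : Prop :=
  Integrable ω (volume.restrict H) ∧
  ∃ A : Set (ℝ × ℝ), A ⊆ H ∧ MeasurableSet A ∧
    (∀ᵐ x ∂volume.restrict H, ω x = A.indicator (fun _ => (1 : ℝ)) x) ∧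
    (∫ x in A, x.2) = M

/-- The relaxed admissible class `K̃_M`: measurable `0 ≤ ω ≤ 1` with
mass `≤ 1` and impulse `≤ M`. -/
def memKt (M : ℝ) (ω : ℝ × ℝ → ℝ) : Prop :=
  Integrable ω (volume.restrict H) ∧
  (∀ᵐ x ∂volume.restrict H, 0 ≤ ω x ∧ ω x ≤ 1) ∧
  norm1 ω ≤ 1 ∧
  Integrable (fun x : ℝ × ℝ => x.2 * |ω x|) (volume.restrict H) ∧
  impulse ω ≤ M

/-- The set of maximizers `S_M` of the energy over `K_M`. -/
def memS (M : ℝ) (ω : ℝ × ℝ → ℝ) : Prop :=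
  memK M ω ∧ ∀ ω' : ℝ × ℝ → ℝ, memK M ω' → energy ω' ≤ energy ω

/-- The maximal energy `I_M` over `K_M`. -/
def Isup (M : ℝ) : ℝ := sSup (energy '' {ω | memK M ω})

/-- The maximal energy `I_{1,∞}` over `K_{1,∞}`. -/
def IsupInf : ℝ := sSup (energy '' {ω | memKinf 1 ω})

/-- The Steiner symmetry condition for a set `Ω ⊆ ℝ²₊`. -/
def SteinerSet (Ω : Set (ℝ × ℝ)) : Prop :=
  (∀ x₁ x₂ : ℝ, 0 < x₂ → (((x₁, x₂) : ℝ × ℝ) ∈ Ω ↔ ((-x₁, x₂) : ℝ × ℝ) ∈ Ω)) ∧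
  (∀ x₂ : ℝ, 0 < x₂ → ∀ a b : ℝ, 0 ≤ a → a ≤ b →
    ((b, x₂) : ℝ × ℝ) ∈ Ω → ((a, x₂) : ℝ × ℝ) ∈ Ω)

/-- The Steiner symmetry condition for a nonnegative function on `ℝ²₊`. -/
def SteinerFn (f : ℝ × ℝ → ℝ) : Prop :=
  (∀ x₁ x₂ : ℝ, 0 < x₂ → f (x₁, x₂) = f (-x₁, x₂)) ∧
  (∀ x₂ : ℝ, 0 < x₂ → ∀ a b : ℝ, 0 ≤ a → a ≤ b → f (b, x₂) ≤ f (a, x₂))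


lemma my_log_one_add_le {t : ℝ} (ht : 0 ≤ t) : Real.log (1 + t) ≤ t := by
  have := Real.log_le_sub_one_of_pos (by linarith : (0:ℝ) < 1 + t)
  linarith

lemma my_log_one_add_le_rpow {t : ℝ} (ht : 0 ≤ t) :
    Real.log (1 + t) ≤ 4 * t ^ ((1:ℝ)/4) := by
  set s := t ^ ((1:ℝ)/4) with hs_def
  have hs : 0 ≤ s := Real.rpow_nonneg ht _
  have hs4 : s ^ 4 = t := by
    rw [hs_def, ← Real.rpow_natCast (t ^ ((1:ℝ)/4)) 4, ← Real.rpow_mul ht]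
    norm_num
  have h1 : (1:ℝ) + t ≤ (1 + s) ^ 4 := by nlinarith [sq_nonneg s, sq_nonneg (1 + s), sq_nonneg (s*s)]
  have h2 : Real.log (1 + t) ≤ Real.log ((1 + s) ^ 4) :=
    Real.log_le_log (by linarith) h1
  have h3 : Real.log ((1 + s) ^ 4) = 4 * Real.log (1 + s) := by
    rw [Real.log_pow]; push_cast; ring
  have h4 : Real.log (1 + s) ≤ s := my_log_one_add_le hs
  linarith

def gfun (v : ℝ) : ℝ := Real.log (1 + 1 / v ^ 2)

lemma gfun_nonneg (v : ℝ) : 0 ≤ gfun v := by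
  apply Real.log_nonneg
  have : (0:ℝ) ≤ 1 / v ^ 2 := by positivity
  linarith

lemma gfun_measurable : Measurable gfun :=
  Real.measurable_log.comp (measurable_const.add ((measurable_id.pow_const 2).const_div 1))

lemma gfun_integrableOn_Ioc : IntegrableOn gfun (Ioc (0:ℝ) 1) := by
  have hB : IntegrableOn (fun v : ℝ => 4 * v ^ (-((1:ℝ)/2))) (Ioc (0:ℝ) 1) := by
    have := (intervalIntegral.intervalIntegrable_rpow' (r := -((1:ℝ)/2)) (by norm_num)
      (a := 0) (b := 1))
    rw [intervalIntegrable_iff_integrableOn_Ioc_of_le zero_le_one] at this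
    exact this.const_mul 4
  refine Integrable.mono hB (gfun_measurable.aestronglyMeasurable.restrict) ?_
  filter_upwards [ae_restrict_mem measurableSet_Ioc] with v hv
  have hv0 : 0 < v := hv.1
  have hval : gfun v ≤ 4 * v ^ (-((1:ℝ)/2)) := by
    have h1 : gfun v ≤ 4 * (1 / v ^ 2) ^ ((1:ℝ)/4) := my_log_one_add_le_rpow (by positivity)
    have h2 : (1 / v ^ 2 : ℝ) ^ ((1:ℝ)/4) = v ^ (-((1:ℝ)/2)) := by
      rw [one_div, ← Real.rpow_natCast v 2, ← Real.rpow_neg hv0.le,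
        ← Real.rpow_mul hv0.le]
      norm_num
    rw [h2] at h1; exact h1
  have hBpos : (0:ℝ) ≤ 4 * v ^ (-((1:ℝ)/2)) := by positivity
  rw [Real.norm_eq_abs, Real.norm_eq_abs, abs_of_nonneg (gfun_nonneg v), abs_of_nonneg hBpos]
  exact hval

lemma gfun_integrableOn_Ioi : IntegrableOn gfun (Ioi (1:ℝ)) := by
  have hB : IntegrableOn (fun v : ℝ => v ^ (-(2:ℝ))) (Ioi (1:ℝ)) :=
    integrableOn_Ioi_rpow_of_lt (by norm_num) zero_lt_one
  refine Integrable.mono hB (gfun_measurable.aestronglyMeasurable.restrict) ?_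
  filter_upwards [ae_restrict_mem measurableSet_Ioi] with v hv
  have hv0 : (0:ℝ) < v := lt_trans zero_lt_one hv
  have hval : gfun v ≤ v ^ (-(2:ℝ)) := by
    have h1 : gfun v ≤ 1 / v ^ 2 := my_log_one_add_le (by positivity)
    have h2 : (1 / v ^ 2 : ℝ) = v ^ (-(2:ℝ)) := by
      rw [one_div, ← Real.rpow_natCast v 2, ← Real.rpow_neg hv0.le]
      norm_num
    rw [h2] at h1; exact h1
  have hBpos : (0:ℝ) ≤ v ^ (-(2:ℝ)) := by positivity
  rw [Real.norm_eq_abs, Real.norm_eq_abs, abs_of_nonneg (gfun_nonneg v), abs_of_nonneg hBpos]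
  exact hval

lemma gfun_integrableOn_pos : IntegrableOn gfun (Ioi (0:ℝ)) := by
  have := gfun_integrableOn_Ioc.union gfun_integrableOn_Ioi
  rwa [Ioc_union_Ioi_eq_Ioi zero_le_one] at this

lemma gfun_integrable : Integrable gfun := by
  have hneg : IntegrableOn gfun (Iio (0:ℝ)) := by
    have hpre : (Neg.neg ⁻¹' (Ioi (0:ℝ)) : Set ℝ) = Iio 0 := by
      ext v; simp
    have h := (MeasurePreserving.integrableOn_comp_preimage
      (Measure.measurePreserving_neg (volume : Measure ℝ))
      (Homeomorph.neg ℝ).measurableEmbedding).2 gfun_integrableOn_pos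
    rw [hpre] at h
    have : gfun ∘ Neg.neg = gfun := by
      funext v; simp [gfun, Function.comp]
    rwa [this] at h
  have hzero : IntegrableOn gfun ({0} : Set ℝ) := by
    rw [IntegrableOn, Measure.restrict_eq_zero.mpr (measure_singleton 0)]
    exact integrable_zero_measure
  have h := (hneg.union gfun_integrableOn_pos).union hzero
  rw [Set.Iio_union_Ioi, Set.compl_union_self] at h
  rwa [integrableOn_univ] at h

/-- the Green function integrated over a horizontal strip satisfies
`∫_{y₂ ≤ α} G(x,y) dy ≤ C x₂^{1/2} α^{3/2}`. -/
theorem green_strip_integral_bound :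
    ∃ C : ℝ, 0 < C ∧ ∀ α : ℝ, 0 < α → ∀ x ∈ H,
      (∫ y in {y ∈ H | y.2 ≤ α}, G x y) ≤
        C * x.2 ^ ((1 : ℝ) / 2) * α ^ ((3 : ℝ) / 2) := by
  set K : ℝ := ∫ v, gfun v with hK_def
  have hK0 : 0 ≤ K := integral_nonneg gfun_nonneg
  refine ⟨K / (2 * π) + 1, by positivity, ?_⟩
  intro α hα x hx
  have hx2 : 0 < x.2 := hx
  -- the strip as a product set
  have hSet : {y ∈ H | y.2 ≤ α} = (univ : Set ℝ) ×ˢ Ioc 0 α := by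
    ext y; simp [H, Set.mem_sep_iff, Set.mem_prod, and_comm]
  -- the scale
  set c : ℝ := 2 * Real.sqrt (x.2 * α) with hc_def
  have hc : 0 < c := by
    have : 0 < Real.sqrt (x.2 * α) := Real.sqrt_pos.mpr (by positivity)
    positivity
  set f : ℝ → ℝ := fun y₁ => (1 / (4 * π)) * gfun ((y₁ - x.1) / c) with hf_def
  -- integrability of the dominating function
  have hfint : Integrable f := by
    have h1 : Integrable (fun u : ℝ => gfun (u / c)) := gfun_integrable.comp_div hc.ne'
    have h2 : Integrable (fun y₁ : ℝ => gfun ((y₁ - x.1) / c)) := h1.comp_sub_right x.1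
    exact h2.const_mul _
  have hπ : (0:ℝ) < π := Real.pi_pos
  -- value of ∫ f
  have hfval : (∫ y₁, f y₁) = 1 / (4 * π) * (c * K) := by
    rw [hf_def]
    rw [integral_const_mul]
    congr 1
    have h1 : (∫ y₁ : ℝ, gfun ((y₁ - x.1) / c)) = ∫ u : ℝ, gfun (u / c) :=
      integral_sub_right_eq_self (fun u => gfun (u / c)) x.1
    rw [h1, Measure.integral_comp_div gfun c, abs_of_pos hc, smul_eq_mul]
  -- the dominating function on the product
  have hprod_meas : volume.restrict ((univ : Set ℝ) ×ˢ Ioc 0 α)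
      = (volume : Measure ℝ).prod (volume.restrict (Ioc 0 α)) := by
    rw [Measure.volume_eq_prod, ← Measure.prod_restrict, Measure.restrict_univ]
  have hDint : IntegrableOn (fun y : ℝ × ℝ => f y.1) ((univ : Set ℝ) ×ˢ Ioc 0 α) := by
    rw [IntegrableOn, hprod_meas]
    have hone : Integrable (fun _ : ℝ => (1:ℝ)) (volume.restrict (Ioc 0 α)) := by
      rw [← IntegrableOn]
      exact (integrableOn_const_iff).mpr (Or.inr (by rw [Real.volume_Ioc]; exact ENNReal.ofReal_lt_top))
    have := hfint.mul_prod hone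
    simpa using this
  -- pointwise a.e. bound  G x y ≤ f y.1  on the strip
  have hNnull : volume {y : ℝ × ℝ | y.1 = x.1} = 0 := by
    have : {y : ℝ × ℝ | y.1 = x.1} = ({x.1} : Set ℝ) ×ˢ (univ : Set ℝ) := by
      ext y
      simp only [Set.mem_setOf_eq, Set.mem_prod, Set.mem_singleton_iff, Set.mem_univ, and_true]
    rw [this, Measure.volume_eq_prod, Measure.prod_prod, Real.volume_singleton, zero_mul]
  have hae : ∀ᵐ y ∂(volume.restrict ((univ : Set ℝ) ×ˢ Ioc 0 α)), y.1 ≠ x.1 := by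
    apply ae_restrict_of_ae
    rw [ae_iff]
    simpa using hNnull
  have hmem : ∀ᵐ y ∂(volume.restrict ((univ : Set ℝ) ×ˢ Ioc 0 α)),
      y ∈ ((univ : Set ℝ) ×ˢ Ioc 0 α) :=
    ae_restrict_mem (MeasurableSet.univ.prod measurableSet_Ioc)
  have hGnonneg : ∀ᵐ y ∂(volume.restrict ((univ : Set ℝ) ×ˢ Ioc 0 α)),
      0 ≤ G x y := by
    filter_upwards [hmem] with y hy
    have hy2 : 0 < y.2 := hy.2.1
    have : (0:ℝ) ≤ 4 * x.2 * y.2 / ((x.1 - y.1) ^ 2 + (x.2 - y.2) ^ 2) := by positivity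
    have hlog : 0 ≤ Real.log (1 + 4 * x.2 * y.2 / ((x.1 - y.1) ^ 2 + (x.2 - y.2) ^ 2)) :=
      Real.log_nonneg (by linarith)
    unfold G
    positivity
  have hbound : ∀ᵐ y ∂(volume.restrict ((univ : Set ℝ) ×ˢ Ioc 0 α)),
      G x y ≤ f y.1 := by
    filter_upwards [hmem, hae] with y hy hy1
    have hy2 : 0 < y.2 := hy.2.1
    have hy2α : y.2 ≤ α := hy.2.2
    have hu : y.1 - x.1 ≠ 0 := sub_ne_zero.mpr hy1
    have hu2 : 0 < (y.1 - x.1) ^ 2 := by positivity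
    have hcsq : c ^ 2 = 4 * (x.2 * α) := by
      rw [hc_def, mul_pow, Real.sq_sqrt (by positivity : (0:ℝ) ≤ x.2 * α)]
      ring
    have harg : 1 / ((y.1 - x.1) / c) ^ 2 = 4 * (x.2 * α) / (y.1 - x.1) ^ 2 := by
      rw [div_pow, one_div_div, hcsq]
    have hdenle : (y.1 - x.1) ^ 2 ≤ (x.1 - y.1) ^ 2 + (x.2 - y.2) ^ 2 := by
      have : (x.1 - y.1) ^ 2 = (y.1 - x.1) ^ 2 := by ring
      nlinarith [sq_nonneg (x.2 - y.2)]
    have hfrac : 4 * x.2 * y.2 / ((x.1 - y.1) ^ 2 + (x.2 - y.2) ^ 2)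
        ≤ 4 * (x.2 * α) / (y.1 - x.1) ^ 2 := by
      apply div_le_div₀ (by positivity) (by nlinarith) hu2 hdenle
    show G x y ≤ (1 / (4 * π)) * gfun ((y.1 - x.1) / c)
    unfold G gfun
    rw [harg]
    have hlog : Real.log (1 + 4 * x.2 * y.2 / ((x.1 - y.1) ^ 2 + (x.2 - y.2) ^ 2))
        ≤ Real.log (1 + 4 * (x.2 * α) / (y.1 - x.1) ^ 2) := by
      apply Real.log_le_log (by positivity)
      linarith
    have h14 : (0:ℝ) ≤ 1 / (4 * π) := by positivity
    exact mul_le_mul_of_nonneg_left hlog h14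
  -- put it together
  rw [hSet]
  have hmain : (∫ y in (univ : Set ℝ) ×ˢ Ioc 0 α, G x y)
      ≤ ∫ y in (univ : Set ℝ) ×ˢ Ioc 0 α, f y.1 :=
    integral_mono_of_nonneg hGnonneg hDint hbound
  have hDval : (∫ y in (univ : Set ℝ) ×ˢ Ioc 0 α, f y.1) = (1 / (4 * π) * (c * K)) * α := by
    have h2 := setIntegral_prod_mul (μ := (volume : Measure ℝ)) (ν := (volume : Measure ℝ))
      f (fun _ : ℝ => (1:ℝ)) univ (Ioc 0 α)
    calc (∫ y in (univ : Set ℝ) ×ˢ Ioc 0 α, f y.1)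
        = ∫ z in (univ : Set ℝ) ×ˢ Ioc 0 α, f z.1 * (fun _ : ℝ => (1:ℝ)) z.2
            ∂((volume : Measure ℝ).prod volume) := by
          rw [← Measure.volume_eq_prod]; simp
      _ = (∫ y₁ in (univ : Set ℝ), f y₁) * ∫ y₂ in Ioc (0:ℝ) α, (1:ℝ) := h2
      _ = (1 / (4 * π) * (c * K)) * α := by
          rw [Measure.restrict_univ, hfval]
          congr 1
          rw [setIntegral_const, Measure.real, Real.volume_Ioc, smul_eq_mul, mul_one,
            ENNReal.toReal_ofReal (by linarith : (0:ℝ) ≤ α - 0)]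
          ring
  -- final computation
  have hsq : Real.sqrt (x.2 * α) = x.2 ^ ((1:ℝ)/2) * α ^ ((1:ℝ)/2) := by
    rw [Real.sqrt_eq_rpow, Real.mul_rpow hx2.le hα.le]
  have hα32 : α ^ ((3:ℝ)/2) = α * α ^ ((1:ℝ)/2) := by
    rw [show ((3:ℝ)/2) = 1 + (1:ℝ)/2 by norm_num, Real.rpow_add hα, Real.rpow_one]
  have hxpos : (0:ℝ) < x.2 ^ ((1:ℝ)/2) := Real.rpow_pos_of_pos hx2 _
  have hαpos : (0:ℝ) < α ^ ((1:ℝ)/2) := Real.rpow_pos_of_pos hα _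
  calc (∫ y in (univ : Set ℝ) ×ˢ Ioc 0 α, G x y)
      ≤ (1 / (4 * π) * (c * K)) * α := hmain.trans_eq hDval
    _ = (K / (2 * π)) * x.2 ^ ((1:ℝ)/2) * α ^ ((3:ℝ)/2) := by
        rw [hc_def, hsq, hα32]; field_simp; ring
    _ ≤ (K / (2 * π) + 1) * x.2 ^ ((1:ℝ)/2) * α ^ ((3:ℝ)/2) := by
        have h32 : (0:ℝ) < α ^ ((3:ℝ)/2) := Real.rpow_pos_of_pos hα _
        nlinarith
end
end

section
/- There exists an absolute constant C₁ > 0 such that for every ω ∈ (L¹ ∩ L²)(ℝ²₊) and every x = (x₁,x₂) ∈ ℝ²₊, |∫_{ℝ²₊} G(x,y)ω(y) dy| ≤ C₁·x₂^{1/2}·‖ω‖₁^{1/2}·‖ω‖₂^{1/2}. -/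
open MeasureTheory Real Set NNReal Filter Topology

noncomputable section

lemma myAdd_rpow_le {u v p : ℝ} (hu : 0 ≤ u) (hv : 0 ≤ v) (hp : 0 ≤ p) (hp1 : p ≤ 1) :
    (u + v) ^ p ≤ u ^ p + v ^ p := by
  have key := NNReal.rpow_add_le_add_rpow u.toNNReal v.toNNReal hp hp1
  have h2 := NNReal.coe_le_coe.2 key
  push_cast at h2
  rwa [Real.coe_toNNReal _ hu, Real.coe_toNNReal _ hv] at h2

lemma myLog_le {t p : ℝ} (ht : 0 ≤ t) (hp : 0 < p) (hp1 : p ≤ 1) :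
    Real.log (1 + t) ≤ t ^ p / p := by
  have h1 : (0:ℝ) < 1 + t := by linarith
  have h2 : p * Real.log (1 + t) = Real.log ((1 + t) ^ p) := (Real.log_rpow h1 p).symm
  have h3 : Real.log ((1 + t) ^ p) ≤ (1 + t) ^ p - 1 :=
    Real.log_le_sub_one_of_pos (Real.rpow_pos_of_pos h1 p)
  have h4 : (1 + t) ^ p ≤ 1 ^ p + t ^ p := myAdd_rpow_le zero_le_one ht hp.le hp1
  rw [Real.one_rpow] at h4
  rw [le_div_iff₀ hp]
  nlinarith

lemma G_nonneg {x y : ℝ × ℝ} (hx : x ∈ H) (hy : y ∈ H) : 0 ≤ G x y := by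
  have hx2 : 0 < x.2 := hx
  have hy2 : 0 < y.2 := hy
  have hpi : (0:ℝ) < π := Real.pi_pos
  apply mul_nonneg (by positivity)
  apply Real.log_nonneg
  have : 0 ≤ 4 * x.2 * y.2 / ((x.1 - y.1) ^ 2 + (x.2 - y.2) ^ 2) := by positivity
  linarith

lemma G_le_kernel {x y : ℝ × ℝ} (hx : x ∈ H) (hy : y ∈ H) {p : ℝ} (hp : 0 < p) (hp1 : p ≤ 1)
    (hc : (4:ℝ) ^ p ≤ 4 * π * p) :
    G x y ≤ x.2 ^ (2*p) * Real.sqrt ((x.1 - y.1) ^ 2 + (x.2 - y.2) ^ 2) ^ (-(2*p))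
          + x.2 ^ p * Real.sqrt ((x.1 - y.1) ^ 2 + (x.2 - y.2) ^ 2) ^ (-p) := by
  have hx2 : 0 < x.2 := hx
  have hy2 : 0 < y.2 := hy
  have hpi : (0:ℝ) < π := Real.pi_pos
  set q : ℝ := (x.1 - y.1) ^ 2 + (x.2 - y.2) ^ 2 with hqdef
  have hq : 0 ≤ q := by positivity
  set s : ℝ := Real.sqrt q with hsdef
  have hs0 : 0 ≤ s := Real.sqrt_nonneg _
  rcases eq_or_lt_of_le hq with hq0 | hq0
  · have hs_eq : s = 0 := by rw [hsdef, ← hq0, Real.sqrt_zero]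
    have hG : G x y = 0 := by
      rw [G, ← hqdef, ← hq0, div_zero, add_zero, Real.log_one, mul_zero]
    rw [hG, hs_eq, Real.zero_rpow (by linarith : -(2*p) ≠ 0), Real.zero_rpow (by linarith : -p ≠ 0)]
    simp
  · have hs : 0 < s := Real.sqrt_pos.2 hq0
    set t : ℝ := 4 * x.2 * y.2 / q with htdef
    have ht : 0 ≤ t := by positivity
    have step1 : G x y ≤ (1 / (4*π)) * (t ^ p / p) := by
      apply mul_le_mul_of_nonneg_left (myLog_le ht hp hp1) (by positivity)
    have ht_pow : t ^ p = 4 ^ p * (x.2 ^ p * y.2 ^ p) * q ^ (-p) := by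
      rw [htdef, Real.div_rpow (by positivity) hq, Real.rpow_neg hq, div_eq_mul_inv]
      rw [show 4 * x.2 * y.2 = 4 * (x.2 * y.2) by ring,
        Real.mul_rpow (by norm_num) (by positivity), Real.mul_rpow hx2.le hy2.le]
    have hy2p : y.2 ^ p ≤ x.2 ^ p + s ^ p := by
      have habs : |x.2 - y.2| ≤ s := by
        rw [hsdef]
        calc |x.2 - y.2| = Real.sqrt ((x.2 - y.2)^2) := (Real.sqrt_sq_eq_abs _).symm
          _ ≤ Real.sqrt q := Real.sqrt_le_sqrt (by nlinarith [sq_nonneg (x.1 - y.1)])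
      have hle : y.2 ≤ x.2 + s := by
        have := abs_le.1 habs
        linarith [this.1]
      calc y.2 ^ p ≤ (x.2 + s) ^ p := Real.rpow_le_rpow hy2.le hle hp.le
        _ ≤ x.2 ^ p + s ^ p := myAdd_rpow_le hx2.le hs0 hp.le hp1
    have hqs : q ^ (-p) = s ^ (-(2*p)) := by
      rw [hsdef, Real.sqrt_eq_rpow, ← Real.rpow_mul hq]
      ring_nf
    have step2 : (1 / (4*π)) * (t ^ p / p) ≤ (x.2 ^ p * y.2 ^ p) * s ^ (-(2*p)) := by
      rw [ht_pow, hqs]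
      have key : (4:ℝ) ^ p / (4*π*p) ≤ 1 := (div_le_one (by positivity)).2 hc
      have expand : 1/(4*π) * (4 ^ p * (x.2 ^ p * y.2 ^ p) * s ^ (-(2*p)) / p)
          = (4 ^ p/(4*π*p)) * ((x.2 ^ p * y.2 ^ p) * s ^ (-(2*p))) := by
        field_simp
      rw [expand]
      calc (4 ^ p/(4*π*p)) * ((x.2 ^ p * y.2 ^ p) * s ^ (-(2*p)))
          ≤ 1 * ((x.2 ^ p * y.2 ^ p) * s ^ (-(2*p))) := by
            apply mul_le_mul_of_nonneg_right key (by positivity)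
        _ = (x.2 ^ p * y.2 ^ p) * s ^ (-(2*p)) := one_mul _
    have step3 : (x.2 ^ p * y.2 ^ p) * s ^ (-(2*p))
        ≤ x.2 ^ (2*p) * s ^ (-(2*p)) + x.2 ^ p * s ^ (-p) := by
      have hsp : 0 ≤ s ^ (-(2*p)) := Real.rpow_nonneg hs0 _
      have hxp : 0 ≤ x.2 ^ p := Real.rpow_nonneg hx2.le _
      calc (x.2 ^ p * y.2 ^ p) * s ^ (-(2*p))
          ≤ (x.2 ^ p * (x.2 ^ p + s ^ p)) * s ^ (-(2*p)) := by
            apply mul_le_mul_of_nonneg_right _ hsp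
            exact mul_le_mul_of_nonneg_left hy2p hxp
        _ = x.2 ^ p * x.2 ^ p * s ^ (-(2*p)) + x.2 ^ p * (s ^ p * s ^ (-(2*p))) := by ring
        _ = x.2 ^ (2*p) * s ^ (-(2*p)) + x.2 ^ p * s ^ (-p) := by
            rw [← Real.rpow_add hx2, ← Real.rpow_add hs]
            ring_nf
    linarith

lemma sq_meas (x : ℝ × ℝ) : Measurable (fun y : ℝ × ℝ => (x.1 - y.1) ^ 2 + (x.2 - y.2) ^ 2) := by
  fun_prop

lemma disk_lintegral (x : ℝ × ℝ) {r : ℝ} (hr : 0 < r) :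
    ∫⁻ y : ℝ × ℝ, ENNReal.ofReal
        ({y : ℝ × ℝ | (x.1 - y.1) ^ 2 + (x.2 - y.2) ^ 2 < r ^ 2}.indicator
          (fun y => (Real.sqrt ((x.1 - y.1) ^ 2 + (x.2 - y.2) ^ 2))⁻¹) y)
      ≤ ENNReal.ofReal (2 * π * r) := by
  set sq : (ℝ × ℝ) → ℝ := fun y => (x.1 - y.1) ^ 2 + (x.2 - y.2) ^ 2 with hsq
  set D : Set (ℝ × ℝ) := {y | sq y < r ^ 2} with hD
  have hDm : MeasurableSet D := measurableSet_lt (sq_meas x) measurable_const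
  set f : (ℝ × ℝ) → ℝ := D.indicator (fun y => (Real.sqrt (sq y))⁻¹) with hf
  have f_nn : 0 ≤ᵐ[volume] f := ae_of_all _ fun y =>
    Set.indicator_nonneg (fun y _ => inv_nonneg.2 (Real.sqrt_nonneg _)) y
  have f_mble : AEMeasurable f volume :=
    (Measurable.indicator (Measurable.inv ((sq_meas x).sqrt)) hDm).aemeasurable
  rw [lintegral_eq_lintegral_meas_lt volume f_nn f_mble]
  have key : ∀ t ∈ Ioi (0:ℝ),
      volume {a : ℝ × ℝ | t < f a} ≤ ENNReal.ofReal (π * (min r t⁻¹) ^ 2) := by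
    intro t ht
    have ht0 : 0 < t := ht
    set ρ : ℝ := min r t⁻¹ with hρ
    have hρ0 : 0 < ρ := lt_min hr (inv_pos.2 ht0)
    have hsub : {a : ℝ × ℝ | t < f a} ⊆ {a : ℝ × ℝ | Real.sqrt (sq a) < ρ} := by
      intro a ha
      simp only [mem_setOf_eq] at ha ⊢
      have haD : a ∈ D := by
        by_contra hc
        rw [hf, Set.indicator_of_notMem hc] at ha
        exact absurd ha (not_lt.2 ht0.le)
      rw [hf, Set.indicator_of_mem haD] at ha
      set s : ℝ := Real.sqrt (sq a) with hs
      have hs_pos : 0 < s := by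
        rcases (Real.sqrt_nonneg (sq a)).eq_or_lt with h | h
        · rw [hs, ← h] at ha ⊢; simp at ha; linarith
        · exact h
      have h1 : s < t⁻¹ := by
        have h := mul_lt_mul_of_pos_left ha hs_pos
        rw [mul_inv_cancel₀ hs_pos.ne'] at h
        calc s = s * t * t⁻¹ := by field_simp
          _ < 1 * t⁻¹ := mul_lt_mul_of_pos_right h (inv_pos.2 ht0)
          _ = t⁻¹ := one_mul _
      have h2 : s < r := (Real.sqrt_lt' hr).2 haD
      exact lt_min h2 h1
    calc volume {a : ℝ × ℝ | t < f a} ≤ volume {a : ℝ × ℝ | Real.sqrt (sq a) < ρ} :=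
          measure_mono hsub
      _ = ENNReal.ofReal ρ ^ 2 * NNReal.pi := by
          have hmp := Complex.volume_preserving_equiv_real_prod
          have hset : Complex.measurableEquivRealProd ⁻¹' {a : ℝ × ℝ | Real.sqrt (sq a) < ρ}
              = Metric.ball ({ re := x.1, im := x.2 } : ℂ) ρ := by
            ext w
            simp only [Set.mem_preimage, Complex.measurableEquivRealProd_apply, mem_setOf_eq,
              Metric.mem_ball, Complex.dist_eq, Complex.norm_def, Complex.normSq_apply]
            have harg : sq (w.re, w.im) = (w - { re := x.1, im := x.2 } : ℂ).re ^ 2 +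
                (w - { re := x.1, im := x.2 } : ℂ).im ^ 2 := by
              simp [hsq, Complex.sub_re, Complex.sub_im]
              ring
            constructor
            · intro h
              rw [show (w - { re := x.1, im := x.2 } : ℂ).re * (w - { re := x.1, im := x.2 } : ℂ).re
                  + (w - { re := x.1, im := x.2 } : ℂ).im * (w - { re := x.1, im := x.2 } : ℂ).im
                  = sq (w.re, w.im) by rw [harg]; ring]
              exact h
            · intro h
              rw [show (w - { re := x.1, im := x.2 } : ℂ).re * (w - { re := x.1, im := x.2 } : ℂ).re
                  + (w - { re := x.1, im := x.2 } : ℂ).im * (w - { re := x.1, im := x.2 } : ℂ).im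
                  = sq (w.re, w.im) by rw [harg]; ring] at h
              exact h
          rw [← hmp.measure_preimage
            (measurableSet_lt ((sq_meas x).sqrt) measurable_const).nullMeasurableSet,
            hset, Complex.volume_ball]
      _ ≤ ENNReal.ofReal (π * ρ ^ 2) := by
          have hpi : (NNReal.pi : ENNReal) = ENNReal.ofReal π := by
            rw [← NNReal.coe_real_pi, ENNReal.ofReal_coe_nnreal]
          rw [← ENNReal.ofReal_pow hρ0.le, hpi, ← ENNReal.ofReal_mul (by positivity)]
          exact ENNReal.ofReal_le_ofReal (le_of_eq (mul_comm _ _))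
  calc ∫⁻ t in Ioi (0:ℝ), volume {a : ℝ × ℝ | t < f a}
      ≤ ∫⁻ t in Ioi (0:ℝ), ENNReal.ofReal (π * (min r t⁻¹) ^ 2) :=
        setLIntegral_mono' measurableSet_Ioi key
    _ ≤ ENNReal.ofReal (2 * π * r) := by
        rw [← Set.Ioc_union_Ioi_eq_Ioi (le_of_lt (inv_pos.2 hr)),
          lintegral_union measurableSet_Ioi (Set.Ioc_disjoint_Ioi le_rfl)]
        have piece1 : ∫⁻ t in Ioc (0:ℝ) r⁻¹, ENNReal.ofReal (π * (min r t⁻¹) ^ 2)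
            = ENNReal.ofReal (π * r) := by
          rw [setLIntegral_congr_fun_ae measurableSet_Ioc
            (ae_of_all _ (fun t (htt : t ∈ Ioc (0:ℝ) r⁻¹) => by
              have h1 : r ≤ t⁻¹ := by
                rw [le_inv_comm₀ hr htt.1]
                exact htt.2
              rw [min_eq_left h1]))]
          rw [setLIntegral_const, Real.volume_Ioc, sub_zero,
            ← ENNReal.ofReal_mul (by positivity)]
          congr 1
          field_simp
        have piece2 : ∫⁻ t in Ioi r⁻¹, ENNReal.ofReal (π * (min r t⁻¹) ^ 2)
            = ENNReal.ofReal (π * r) := by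
          rw [setLIntegral_congr_fun_ae measurableSet_Ioi
            (ae_of_all _ (fun t (htt : t ∈ Ioi r⁻¹) => by
              have ht0 : (0:ℝ) < t := lt_trans (inv_pos.2 hr) htt
              have h1 : t⁻¹ ≤ r := by
                rw [inv_le_comm₀ ht0 hr]
                exact le_of_lt htt
              have hpow : (t⁻¹)^2 = t ^ (-2:ℝ) := by
                have h2 : t ^ (-2:ℝ) = (t ^ (2:ℕ))⁻¹ := by
                  rw [← Real.rpow_natCast t 2, ← Real.rpow_neg ht0.le]
                  norm_num
                rw [h2, inv_pow]
              rw [min_eq_right h1, hpow]))]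
          rw [← ofReal_integral_eq_lintegral_ofReal]
          · rw [MeasureTheory.integral_const_mul, integral_Ioi_rpow_of_lt (by norm_num)
              (inv_pos.2 hr)]
            norm_num [Real.rpow_neg_one]
          · exact (integrableOn_Ioi_rpow_of_lt (by norm_num) (inv_pos.2 hr)).const_mul π
          · refine (ae_restrict_iff' measurableSet_Ioi).2 (ae_of_all _ fun t ht => ?_)
            have ht0 : (0:ℝ) < t := lt_trans (inv_pos.2 hr) ht
            positivity
        rw [piece1, piece2, ← ENNReal.ofReal_add (by positivity) (by positivity)]
        apply ENNReal.ofReal_le_ofReal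
        nlinarith [Real.pi_pos]

lemma rpow_mul_rpow_self {b : ℝ} (hb : 0 < b) {p q c : ℝ} (h : p + q = c) :
    b ^ p * b ^ q = b ^ c := by rw [← Real.rpow_add hb, h]
lemma half_mul_self {b : ℝ} (hb : 0 < b) : b ^ ((1:ℝ)/2) * b ^ ((1:ℝ)/2) = b := by
  rw [rpow_mul_rpow_self hb (by norm_num : (1:ℝ)/2 + 1/2 = 1), Real.rpow_one]
lemma div_rpow' {u v : ℝ} (hu : 0 ≤ u) (hv : 0 ≤ v) (p : ℝ) :
    (u / v) ^ p = u ^ p * v ^ (-p) := by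
  rw [div_eq_mul_inv, Real.mul_rpow hu (inv_nonneg.2 hv), Real.inv_rpow hv, ← Real.rpow_neg hv]
lemma mul_rpow_rpow {a l : ℝ} (ha : 0 < a) (hl : 0 < l) (p q c : ℝ) :
    (a ^ p * l ^ q) ^ c = a ^ (p * c) * l ^ (q * c) := by
  rw [Real.mul_rpow (Real.rpow_nonneg ha.le _) (Real.rpow_nonneg hl.le _),
    ← Real.rpow_mul ha.le, ← Real.rpow_mul hl.le]
lemma neg_quarter_le {s r : ℝ} (hs : 0 ≤ s) (hsr : s ≤ r) :
    s ^ (-((1:ℝ)/4)) ≤ r ^ ((1:ℝ)/4) * s ^ (-((1:ℝ)/2)) := by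
  rcases hs.eq_or_lt with h | h
  · rw [← h, Real.zero_rpow (by norm_num), Real.zero_rpow (by norm_num), mul_zero]
  · have e : s ^ (-((1:ℝ)/4)) = s ^ ((1:ℝ)/4) * s ^ (-((1:ℝ)/2)) :=
      (rpow_mul_rpow_self h (by norm_num)).symm
    rw [e]
    exact mul_le_mul_of_nonneg_right (Real.rpow_le_rpow hs hsr (by norm_num))
      (Real.rpow_nonneg hs _)

lemma G_quarter {x y : ℝ × ℝ} (hx : x ∈ H) (hy : y ∈ H) :
    G x y ≤ x.2 ^ ((1:ℝ)/2) * Real.sqrt ((x.1 - y.1) ^ 2 + (x.2 - y.2) ^ 2) ^ (-((1:ℝ)/2))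
          + x.2 ^ ((1:ℝ)/4) * Real.sqrt ((x.1 - y.1) ^ 2 + (x.2 - y.2) ^ 2) ^ (-((1:ℝ)/4)) := by
  have hc : (4:ℝ) ^ ((1:ℝ)/4) ≤ 4 * π * ((1:ℝ)/4) := by
    have h1 : (4:ℝ) ^ ((1:ℝ)/4) ≤ (4:ℝ) ^ ((1:ℝ)/2) :=
      Real.rpow_le_rpow_of_exponent_le (by norm_num) (by norm_num)
    have h2 : (4:ℝ) ^ ((1:ℝ)/2) = 2 := by
      rw [show (4:ℝ) = 2 ^ (2:ℕ) by norm_num, ← Real.rpow_natCast 2 2,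
        ← Real.rpow_mul (by norm_num)]
      norm_num
    have h3 : (3:ℝ) < π := Real.pi_gt_three
    nlinarith
  have h := G_le_kernel hx hy (p := (1:ℝ)/4) (by norm_num) (by norm_num) hc
  norm_num at h
  convert h using 4 <;> norm_num

lemma G_threequarter {x y : ℝ × ℝ} (hx : x ∈ H) (hy : y ∈ H) :
    G x y ≤ x.2 ^ ((3:ℝ)/2) * Real.sqrt ((x.1 - y.1) ^ 2 + (x.2 - y.2) ^ 2) ^ (-((3:ℝ)/2))
          + x.2 ^ ((3:ℝ)/4) * Real.sqrt ((x.1 - y.1) ^ 2 + (x.2 - y.2) ^ 2) ^ (-((3:ℝ)/4)) := by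
  have hc : (4:ℝ) ^ ((3:ℝ)/4) ≤ 4 * π * ((3:ℝ)/4) := by
    have h1 : (4:ℝ) ^ ((3:ℝ)/4) ≤ (4:ℝ) ^ ((1:ℝ)) :=
      Real.rpow_le_rpow_of_exponent_le (by norm_num) (by norm_num)
    rw [Real.rpow_one] at h1
    have h3 : (3:ℝ) < π := Real.pi_gt_three
    nlinarith
  have h := G_le_kernel hx hy (p := (3:ℝ)/4) (by norm_num) (by norm_num) hc
  norm_num at h
  convert h using 4 <;> norm_num

lemma H_meas : MeasurableSet H := measurableSet_lt measurable_const measurable_snd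

lemma G_meas (x : ℝ × ℝ) : Measurable (fun y => G x y) := by
  unfold G
  exact (Real.measurable_log.comp (by fun_prop)).const_mul _

lemma master {ω : ℝ × ℝ → ℝ} (hω : MemL1L2 ω) {x : ℝ × ℝ} (hx : x ∈ H)
    {r κ M : ℝ} (hr : 0 < r) (hκ : 0 ≤ κ) (hM : 0 ≤ M)
    (hnear : ∀ y ∈ H, Real.sqrt ((x.1 - y.1) ^ 2 + (x.2 - y.2) ^ 2) < r →
        G x y ≤ κ * Real.sqrt ((x.1 - y.1) ^ 2 + (x.2 - y.2) ^ 2) ^ (-((1:ℝ)/2)))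
    (hfar : ∀ y ∈ H, r ≤ Real.sqrt ((x.1 - y.1) ^ 2 + (x.2 - y.2) ^ 2) → G x y ≤ M) :
    |Gpot ω x| ≤ κ * (2 * π * r) ^ ((1:ℝ)/2) * norm2 ω + M * norm1 ω := by
  set sq : (ℝ × ℝ) → ℝ := fun y => (x.1 - y.1) ^ 2 + (x.2 - y.2) ^ 2 with hsq
  set s : (ℝ × ℝ) → ℝ := fun y => Real.sqrt (sq y) with hs
  have hs0 : ∀ y, 0 ≤ s y := fun y => Real.sqrt_nonneg _
  set D : Set (ℝ × ℝ) := {y | sq y < r ^ 2} with hD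
  have hDm : MeasurableSet D := measurableSet_lt (sq_meas x) measurable_const
  set μ : Measure (ℝ × ℝ) := volume.restrict H with hμ
  -- nonnegativity facts
  have hN1 : 0 ≤ norm1 ω := integral_nonneg fun y => abs_nonneg _
  have hI2 : 0 ≤ ∫ y in H, ω y ^ 2 := integral_nonneg fun y => sq_nonneg _
  have hN2 : 0 ≤ norm2 ω := Real.rpow_nonneg hI2 _
  -- the three ENNReal-valued functions
  set g : (ℝ × ℝ) → ENNReal := fun y => ENNReal.ofReal |ω y| with hg
  set F : (ℝ × ℝ) → ENNReal :=
    D.indicator (fun y => ENNReal.ofReal (κ * s y ^ (-((1:ℝ)/2)))) with hF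
  have hg_aem : AEMeasurable g μ := hω.1.abs.aestronglyMeasurable.aemeasurable.ennreal_ofReal
  have hF_m : Measurable F :=
    (Measurable.ennreal_ofReal (((sq_meas x).sqrt.pow_const _).const_mul κ)).indicator hDm
  -- Step 1 : reduce to a lintegral estimate
  have step1 : |Gpot ω x| ≤ (∫⁻ y, ENNReal.ofReal ‖G x y * ω y‖ ∂μ).toReal := by
    rw [show |Gpot ω x| = ‖Gpot ω x‖ from (Real.norm_eq_abs _).symm]
    exact norm_integral_le_lintegral_norm _
  -- Step 2 : pointwise bound
  have step2 : ∀ᵐ y ∂μ, ENNReal.ofReal ‖G x y * ω y‖ ≤ F y * g y + ENNReal.ofReal M * g y := by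
    filter_upwards [ae_restrict_mem H_meas] with y hy
    have hGn : 0 ≤ G x y := G_nonneg hx hy
    have habs : ‖G x y * ω y‖ = G x y * |ω y| := by
      rw [norm_mul, Real.norm_eq_abs, Real.norm_eq_abs, abs_of_nonneg hGn]
    by_cases hyD : y ∈ D
    · have hlt : s y < r := (Real.sqrt_lt' hr).2 hyD
      have hGb : G x y ≤ κ * s y ^ (-((1:ℝ)/2)) := hnear y hy hlt
      have : ENNReal.ofReal ‖G x y * ω y‖ ≤ F y * g y := by
        rw [habs, hF, Set.indicator_of_mem hyD, hg, ← ENNReal.ofReal_mul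
          (by positivity : 0 ≤ κ * s y ^ (-((1:ℝ)/2)))]
        exact ENNReal.ofReal_le_ofReal (mul_le_mul_of_nonneg_right hGb (abs_nonneg _))
      exact le_trans this (le_add_right le_rfl)
    · have hge : r ≤ s y := by
        have h1 : r ^ 2 ≤ sq y := not_lt.1 hyD
        have := Real.sqrt_le_sqrt h1
        rwa [Real.sqrt_sq hr.le] at this
      have hGb : G x y ≤ M := hfar y hy hge
      have : ENNReal.ofReal ‖G x y * ω y‖ ≤ ENNReal.ofReal M * g y := by
        rw [habs, hg, ← ENNReal.ofReal_mul hM]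
        exact ENNReal.ofReal_le_ofReal (mul_le_mul_of_nonneg_right hGb (abs_nonneg _))
      calc ENNReal.ofReal ‖G x y * ω y‖ ≤ ENNReal.ofReal M * g y := this
        _ ≤ F y * g y + ENNReal.ofReal M * g y := le_add_left le_rfl
  have step3 : ∫⁻ y, ENNReal.ofReal ‖G x y * ω y‖ ∂μ
      ≤ ∫⁻ y, F y * g y ∂μ + ∫⁻ y, ENNReal.ofReal M * g y ∂μ := by
    calc ∫⁻ y, ENNReal.ofReal ‖G x y * ω y‖ ∂μ
        ≤ ∫⁻ y, (F y * g y + ENNReal.ofReal M * g y) ∂μ := lintegral_mono_ae step2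
      _ = _ := lintegral_add_left' (hF_m.aemeasurable.mul hg_aem) _
  -- the L¹ term
  have hg_int : ∫⁻ y, g y ∂μ = ENNReal.ofReal (norm1 ω) := by
    rw [hg, ← ofReal_integral_eq_lintegral_ofReal hω.1.abs (ae_of_all _ fun y => abs_nonneg _)]
    rfl
  have far_term : ∫⁻ y, ENNReal.ofReal M * g y ∂μ = ENNReal.ofReal (M * norm1 ω) := by
    rw [lintegral_const_mul' _ _ ENNReal.ofReal_ne_top, hg_int, ← ENNReal.ofReal_mul hM]
  -- the L² term , via Hölder
  have hconj : Real.HolderConjugate 2 2 := Real.HolderConjugate.two_two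
  have holder := ENNReal.lintegral_mul_le_Lp_mul_Lq μ hconj hF_m.aemeasurable hg_aem
  -- compute/estimate the two factors
  have hFsq : ∀ y, F y ^ (2:ℝ)
      = ENNReal.ofReal (κ ^ 2) * ENNReal.ofReal (D.indicator (fun y => (s y)⁻¹) y) := by
    intro y
    by_cases hyD : y ∈ D
    · rw [hF, Set.indicator_of_mem hyD, Set.indicator_of_mem hyD,
        ENNReal.ofReal_rpow_of_nonneg (by positivity) (by norm_num : (0:ℝ) ≤ 2),
        ← ENNReal.ofReal_mul (by positivity)]
      congr 1
      rw [Real.mul_rpow hκ (Real.rpow_nonneg (hs0 y) _), ← Real.rpow_mul (hs0 y),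
        show (-((1:ℝ)/2) * 2) = -1 by norm_num, Real.rpow_neg_one,
        show (2:ℝ) = ((2:ℕ):ℝ) by norm_num, Real.rpow_natCast]
    · rw [hF, Set.indicator_of_notMem hyD, Set.indicator_of_notMem hyD,
        ENNReal.zero_rpow_of_pos (by norm_num : (0:ℝ) < 2)]
      simp
  have hA : ∫⁻ y, F y ^ (2:ℝ) ∂μ ≤ ENNReal.ofReal (κ ^ 2 * (2 * π * r)) := by
    have h1 : ∫⁻ y, F y ^ (2:ℝ) ∂μ
        = ENNReal.ofReal (κ ^ 2) * ∫⁻ y, ENNReal.ofReal (D.indicator (fun y => (s y)⁻¹) y) ∂μ := by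
      rw [← lintegral_const_mul' _ _ ENNReal.ofReal_ne_top]
      exact lintegral_congr fun y => hFsq y
    rw [h1]
    calc ENNReal.ofReal (κ ^ 2) * ∫⁻ y, ENNReal.ofReal (D.indicator (fun y => (s y)⁻¹) y) ∂μ
        ≤ ENNReal.ofReal (κ ^ 2) * ∫⁻ y, ENNReal.ofReal (D.indicator (fun y => (s y)⁻¹) y) := by
          exact mul_le_mul_right (lintegral_mono' Measure.restrict_le_self le_rfl) _
      _ ≤ ENNReal.ofReal (κ ^ 2) * ENNReal.ofReal (2 * π * r) :=
          mul_le_mul_right (disk_lintegral x hr) _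
      _ = ENNReal.ofReal (κ ^ 2 * (2 * π * r)) := (ENNReal.ofReal_mul (by positivity)).symm
  have hB : ∫⁻ y, g y ^ (2:ℝ) ∂μ = ENNReal.ofReal (∫ y in H, ω y ^ 2) := by
    have h1 : ∀ y, g y ^ (2:ℝ) = ENNReal.ofReal (ω y ^ 2) := fun y => by
      rw [hg, ENNReal.ofReal_rpow_of_nonneg (abs_nonneg _) (by norm_num : (0:ℝ) ≤ 2),
        show (2:ℝ) = ((2:ℕ):ℝ) by norm_num, Real.rpow_natCast, sq_abs]
    rw [lintegral_congr h1,
      ← ofReal_integral_eq_lintegral_ofReal hω.2 (ae_of_all _ fun y => sq_nonneg _)]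
  have near_term : ∫⁻ y, F y * g y ∂μ
      ≤ ENNReal.ofReal (κ * (2 * π * r) ^ ((1:ℝ)/2) * norm2 ω) := by
    have h2 : (∫⁻ y, F y ^ (2:ℝ) ∂μ) ^ ((1:ℝ)/2)
        ≤ ENNReal.ofReal (κ * (2 * π * r) ^ ((1:ℝ)/2)) := by
      calc (∫⁻ y, F y ^ (2:ℝ) ∂μ) ^ ((1:ℝ)/2)
          ≤ (ENNReal.ofReal (κ ^ 2 * (2 * π * r))) ^ ((1:ℝ)/2) :=
            ENNReal.rpow_le_rpow hA (by norm_num)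
        _ = ENNReal.ofReal ((κ ^ 2 * (2 * π * r)) ^ ((1:ℝ)/2)) :=
            ENNReal.ofReal_rpow_of_nonneg (by positivity) (by norm_num)
        _ = ENNReal.ofReal (κ * (2 * π * r) ^ ((1:ℝ)/2)) := by
            congr 1
            rw [Real.mul_rpow (by positivity) (by positivity), ← Real.rpow_natCast κ 2,
              ← Real.rpow_mul hκ]
            norm_num
    have h3 : (∫⁻ y, g y ^ (2:ℝ) ∂μ) ^ ((1:ℝ)/2) = ENNReal.ofReal (norm2 ω) := by
      rw [hB, ENNReal.ofReal_rpow_of_nonneg hI2 (by norm_num)]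
      rfl
    calc ∫⁻ y, F y * g y ∂μ
        ≤ (∫⁻ y, F y ^ (2:ℝ) ∂μ) ^ ((1:ℝ)/2) * (∫⁻ y, g y ^ (2:ℝ) ∂μ) ^ ((1:ℝ)/2) := by
          have := ENNReal.lintegral_mul_le_Lp_mul_Lq μ hconj hF_m.aemeasurable hg_aem
          simpa using this
      _ ≤ ENNReal.ofReal (κ * (2 * π * r) ^ ((1:ℝ)/2)) * ENNReal.ofReal (norm2 ω) := by
          rw [h3]
          exact mul_le_mul_left h2 _
      _ = ENNReal.ofReal (κ * (2 * π * r) ^ ((1:ℝ)/2) * norm2 ω) :=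
          (ENNReal.ofReal_mul (by positivity)).symm
  -- combine
  have total : ∫⁻ y, ENNReal.ofReal ‖G x y * ω y‖ ∂μ
      ≤ ENNReal.ofReal (κ * (2 * π * r) ^ ((1:ℝ)/2) * norm2 ω + M * norm1 ω) := by
    calc ∫⁻ y, ENNReal.ofReal ‖G x y * ω y‖ ∂μ
        ≤ ∫⁻ y, F y * g y ∂μ + ∫⁻ y, ENNReal.ofReal M * g y ∂μ := step3
      _ ≤ ENNReal.ofReal (κ * (2 * π * r) ^ ((1:ℝ)/2) * norm2 ω)
            + ENNReal.ofReal (M * norm1 ω) := by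
          rw [far_term]
          exact add_le_add_left near_term _
      _ = _ := (ENNReal.ofReal_add (by positivity) (by positivity)).symm
  have hfin : (∫⁻ y, ENNReal.ofReal ‖G x y * ω y‖ ∂μ).toReal
      ≤ κ * (2 * π * r) ^ ((1:ℝ)/2) * norm2 ω + M * norm1 ω := by
    have h := ENNReal.toReal_mono ENNReal.ofReal_ne_top total
    rwa [ENNReal.toReal_ofReal (by positivity)] at h
  exact le_trans step1 hfin

lemma sqrt_2pir_le {r : ℝ} (hr : 0 < r) : (2 * π * r) ^ ((1:ℝ)/2) ≤ 3 * r ^ ((1:ℝ)/2) := by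
  have h9 : ((9:ℝ)) ^ ((1:ℝ)/2) = 3 := by
    rw [show (9:ℝ) = 3 ^ (2:ℕ) by norm_num, ← Real.rpow_natCast 3 2,
      ← Real.rpow_mul (by norm_num)]
    norm_num
  have h1 : (2 * π * r) ^ ((1:ℝ)/2) = (2 * π) ^ ((1:ℝ)/2) * r ^ ((1:ℝ)/2) := by
    rw [Real.mul_rpow (by positivity) hr.le]
  have h2 : (2 * π) ^ ((1:ℝ)/2) ≤ (9:ℝ) ^ ((1:ℝ)/2) := by
    apply Real.rpow_le_rpow (by positivity) _ (by norm_num)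
    nlinarith [Real.pi_le_four]
  rw [h1]
  apply mul_le_mul_of_nonneg_right _ (Real.rpow_nonneg hr.le _)
  rw [h9] at h2
  exact h2

set_option maxHeartbeats 2000000 in
/-- pointwise bound `|𝒢[ω](x)| ≤ C₁ x₂^{1/2} ‖ω‖₁^{1/2} ‖ω‖₂^{1/2}`
for `ω ∈ (L¹ ∩ L²)(ℝ²₊)`. -/
theorem gpot_pointwise_bound_L1L2 :
    ∃ C₁ : ℝ, 0 < C₁ ∧ ∀ ω : ℝ × ℝ → ℝ, MemL1L2 ω → ∀ x ∈ H,
      |Gpot ω x| ≤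
        C₁ * x.2 ^ ((1 : ℝ) / 2) * norm1 ω ^ ((1 : ℝ) / 2) * norm2 ω ^ ((1 : ℝ) / 2) := by
  refine ⟨8, by norm_num, ?_⟩
  intro ω hω x hx
  have hx2 : 0 < x.2 := hx
  have hN1 : 0 ≤ norm1 ω := integral_nonneg fun y => abs_nonneg _
  have hI2 : 0 ≤ ∫ y in H, ω y ^ 2 := integral_nonneg fun y => sq_nonneg _
  have hN2 : 0 ≤ norm2 ω := Real.rpow_nonneg hI2 _
  by_cases hzero : ∀ᵐ y ∂volume.restrict H, ω y = 0
  · have hGpot : Gpot ω x = 0 := by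
      rw [Gpot, integral_congr_ae (g := fun _ => (0:ℝ))
        (by filter_upwards [hzero] with y hy; rw [hy, mul_zero]), integral_zero]
    rw [hGpot, abs_zero]
    have h1 : (0:ℝ) ≤ x.2 ^ ((1:ℝ)/2) := Real.rpow_nonneg hx2.le _
    have h2 : (0:ℝ) ≤ norm1 ω ^ ((1:ℝ)/2) := Real.rpow_nonneg hN1 _
    have h3 : (0:ℝ) ≤ norm2 ω ^ ((1:ℝ)/2) := Real.rpow_nonneg hN2 _
    positivity
  · have hN1pos : 0 < norm1 ω := by
      rcases hN1.eq_or_lt with h | h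
      · exfalso
        apply hzero
        have habs := (integral_eq_zero_iff_of_nonneg_ae
          (ae_of_all _ fun y => abs_nonneg (ω y)) hω.1.abs).1 h.symm
        filter_upwards [habs] with y hy
        exact abs_eq_zero.1 hy
      · exact h
    have hI2pos : 0 < ∫ y in H, ω y ^ 2 := by
      rcases hI2.eq_or_lt with h | h
      · exfalso
        apply hzero
        have hsq := (integral_eq_zero_iff_of_nonneg_ae
          (ae_of_all _ fun y => sq_nonneg (ω y)) hω.2).1 h.symm
        filter_upwards [hsq] with y hy
        exact pow_eq_zero_iff (by norm_num) |>.1 hy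
      · exact h
    have hN2pos : 0 < norm2 ω := Real.rpow_pos_of_pos hI2pos _
    set a : ℝ := x.2 with ha
    set N1 : ℝ := norm1 ω with hN1d
    set N2 : ℝ := norm2 ω with hN2d
    set l : ℝ := N1 / N2 with hl
    have hlpos : 0 < l := div_pos hN1pos hN2pos
    -- identities
    have idlhalf : l ^ ((1:ℝ)/2) * N2 = N1 ^ ((1:ℝ)/2) * N2 ^ ((1:ℝ)/2) := by
      rw [hl, div_rpow' hN1pos.le hN2pos.le]
      have : N2 ^ (-((1:ℝ)/2)) * N2 = N2 ^ ((1:ℝ)/2) := by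
        nth_rewrite 2 [show N2 = N2 ^ (1:ℝ) from (Real.rpow_one N2).symm]
        exact rpow_mul_rpow_self hN2pos (by norm_num)
      rw [mul_assoc, this]
    have idlneg : l ^ (-((1:ℝ)/2)) * N1 = N1 ^ ((1:ℝ)/2) * N2 ^ ((1:ℝ)/2) := by
      rw [hl, div_rpow' hN1pos.le hN2pos.le, neg_neg]
      have : N1 ^ (-((1:ℝ)/2)) * N1 = N1 ^ ((1:ℝ)/2) := by
        nth_rewrite 2 [show N1 = N1 ^ (1:ℝ) from (Real.rpow_one N1).symm]
        exact rpow_mul_rpow_self hN1pos (by norm_num)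
      rw [show N1 ^ (-((1:ℝ)/2)) * N2 ^ ((1:ℝ)/2) * N1
          = N1 ^ (-((1:ℝ)/2)) * N1 * N2 ^ ((1:ℝ)/2) by ring, this]
    clear_value a N1 N2 l
    rw [show (8:ℝ) * a ^ ((1:ℝ)/2) * N1 ^ ((1:ℝ)/2) * N2 ^ ((1:ℝ)/2)
        = 8 * (a ^ ((1:ℝ)/2) * (N1 ^ ((1:ℝ)/2) * N2 ^ ((1:ℝ)/2))) by ring]
    set T : ℝ := a ^ ((1:ℝ)/2) * (N1 ^ ((1:ℝ)/2) * N2 ^ ((1:ℝ)/2)) with hT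
    by_cases hcase : l ≤ a
    · -- Case B : small impulse-to-mass ratio, r = l
      set r : ℝ := l with hrd
      have hr : 0 < r := hlpos
      set κ : ℝ := a ^ ((1:ℝ)/2) + a ^ ((1:ℝ)/4) * r ^ ((1:ℝ)/4) with hκd
      set M : ℝ := a ^ ((1:ℝ)/2) * r ^ (-((1:ℝ)/2)) + a ^ ((1:ℝ)/4) * r ^ (-((1:ℝ)/4)) with hMd
      have hκ : 0 ≤ κ := by positivity
      have hM : 0 ≤ M := by positivity
      have hnear : ∀ y ∈ H, Real.sqrt ((x.1 - y.1) ^ 2 + (x.2 - y.2) ^ 2) < r →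
          G x y ≤ κ * Real.sqrt ((x.1 - y.1) ^ 2 + (x.2 - y.2) ^ 2) ^ (-((1:ℝ)/2)) := by
        intro y hy hlt
        set s : ℝ := Real.sqrt ((x.1 - y.1) ^ 2 + (x.2 - y.2) ^ 2) with hs
        have hs0 : 0 ≤ s := Real.sqrt_nonneg _
        have h1 := G_quarter hx hy
        rw [← hs, ← ha] at h1
        have h2 := neg_quarter_le hs0 hlt.le
        have h3 : a ^ ((1:ℝ)/4) * s ^ (-((1:ℝ)/4))
            ≤ a ^ ((1:ℝ)/4) * (r ^ ((1:ℝ)/4) * s ^ (-((1:ℝ)/2))) :=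
          mul_le_mul_of_nonneg_left h2 (Real.rpow_nonneg hx2.le _)
        have expand : (a ^ ((1:ℝ)/2) + a ^ ((1:ℝ)/4) * r ^ ((1:ℝ)/4)) * s ^ (-((1:ℝ)/2))
            = a ^ ((1:ℝ)/2) * s ^ (-((1:ℝ)/2))
              + a ^ ((1:ℝ)/4) * (r ^ ((1:ℝ)/4) * s ^ (-((1:ℝ)/2))) := by ring
        rw [hκd, expand]
        linarith only [h1, h3]
      have hfar : ∀ y ∈ H, r ≤ Real.sqrt ((x.1 - y.1) ^ 2 + (x.2 - y.2) ^ 2) →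
          G x y ≤ M := by
        intro y hy hge
        set s : ℝ := Real.sqrt ((x.1 - y.1) ^ 2 + (x.2 - y.2) ^ 2) with hs
        have h1 := G_quarter hx hy
        rw [← hs, ← ha] at h1
        have h2 : s ^ (-((1:ℝ)/2)) ≤ r ^ (-((1:ℝ)/2)) :=
          Real.rpow_le_rpow_of_nonpos hr hge (by norm_num)
        have h3 : s ^ (-((1:ℝ)/4)) ≤ r ^ (-((1:ℝ)/4)) :=
          Real.rpow_le_rpow_of_nonpos hr hge (by norm_num)
        have h4 : a ^ ((1:ℝ)/2) * s ^ (-((1:ℝ)/2)) ≤ a ^ ((1:ℝ)/2) * r ^ (-((1:ℝ)/2)) :=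
          mul_le_mul_of_nonneg_left h2 (Real.rpow_nonneg hx2.le _)
        have h5 : a ^ ((1:ℝ)/4) * s ^ (-((1:ℝ)/4)) ≤ a ^ ((1:ℝ)/4) * r ^ (-((1:ℝ)/4)) :=
          mul_le_mul_of_nonneg_left h3 (Real.rpow_nonneg hx2.le _)
        rw [hMd]
        linarith only [h1, h4, h5]
      have hmaster := master hω hx hr hκ hM hnear hfar
      rw [← hN1d, ← hN2d] at hmaster
      -- algebra
      have hκb : κ ≤ 2 * a ^ ((1:ℝ)/2) := by
        have h1 : a ^ ((1:ℝ)/4) * r ^ ((1:ℝ)/4) ≤ a ^ ((1:ℝ)/4) * a ^ ((1:ℝ)/4) :=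
          mul_le_mul_of_nonneg_left (Real.rpow_le_rpow hr.le hcase (by norm_num))
            (Real.rpow_nonneg hx2.le _)
        rw [rpow_mul_rpow_self hx2 (by norm_num : (1:ℝ)/4 + 1/4 = 1/2)] at h1
        rw [hκd]
        linarith
      have hnear_val : κ * (2 * π * r) ^ ((1:ℝ)/2) * N2 ≤ 6 * T := by
        have h1 : κ * (2 * π * r) ^ ((1:ℝ)/2) ≤ (2 * a ^ ((1:ℝ)/2)) * (3 * r ^ ((1:ℝ)/2)) :=
          mul_le_mul hκb (sqrt_2pir_le hr) (by positivity) (by positivity)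
        calc κ * (2 * π * r) ^ ((1:ℝ)/2) * N2
            ≤ (2 * a ^ ((1:ℝ)/2)) * (3 * r ^ ((1:ℝ)/2)) * N2 :=
              mul_le_mul_of_nonneg_right h1 hN2pos.le
          _ = 6 * (a ^ ((1:ℝ)/2) * (l ^ ((1:ℝ)/2) * N2)) := by rw [hrd]; ring
          _ = 6 * T := by rw [idlhalf, hT]
      have hMb : M ≤ 2 * (a ^ ((1:ℝ)/2) * r ^ (-((1:ℝ)/2))) := by
        have h1 : a ^ ((1:ℝ)/4) * r ^ (-((1:ℝ)/4))
            ≤ a ^ ((1:ℝ)/4) * (a ^ ((1:ℝ)/4) * r ^ (-((1:ℝ)/2))) := by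
          apply mul_le_mul_of_nonneg_left _ (Real.rpow_nonneg hx2.le _)
          have e : r ^ (-((1:ℝ)/4)) = r ^ ((1:ℝ)/4) * r ^ (-((1:ℝ)/2)) :=
            (rpow_mul_rpow_self hr (by norm_num)).symm
          rw [e]
          exact mul_le_mul_of_nonneg_right (Real.rpow_le_rpow hr.le hcase (by norm_num))
            (Real.rpow_nonneg hr.le _)
        have e2 : a ^ ((1:ℝ)/4) * (a ^ ((1:ℝ)/4) * r ^ (-((1:ℝ)/2)))
            = a ^ ((1:ℝ)/2) * r ^ (-((1:ℝ)/2)) := by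
          rw [← mul_assoc, rpow_mul_rpow_self hx2 (by norm_num : (1:ℝ)/4 + 1/4 = 1/2)]
        rw [hMd]
        rw [e2] at h1
        linarith
      have hfar_val : M * N1 ≤ 2 * T := by
        calc M * N1 ≤ 2 * (a ^ ((1:ℝ)/2) * r ^ (-((1:ℝ)/2))) * N1 :=
              mul_le_mul_of_nonneg_right hMb hN1pos.le
          _ = 2 * (a ^ ((1:ℝ)/2) * (l ^ (-((1:ℝ)/2)) * N1)) := by rw [hrd]; ring
          _ = 2 * T := by rw [idlneg, hT]
      calc |Gpot ω x| ≤ κ * (2 * π * r) ^ ((1:ℝ)/2) * N2 + M * N1 := hmaster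
        _ ≤ 6 * T + 2 * T := add_le_add hnear_val hfar_val
        _ = 8 * T := by ring
    · -- Case A : a < l, take r = a^(1/3) l^(2/3)
      push_neg at hcase
      set r : ℝ := a ^ ((1:ℝ)/3) * l ^ ((2:ℝ)/3) with hrd
      have hr : 0 < r := by positivity
      have haler : a ≤ r := by
        have e : a = a ^ ((1:ℝ)/3) * a ^ ((2:ℝ)/3) := by
          rw [rpow_mul_rpow_self hx2 (by norm_num : (1:ℝ)/3 + 2/3 = 1), Real.rpow_one]
        calc a = a ^ ((1:ℝ)/3) * a ^ ((2:ℝ)/3) := e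
          _ ≤ a ^ ((1:ℝ)/3) * l ^ ((2:ℝ)/3) := mul_le_mul_of_nonneg_left
              (Real.rpow_le_rpow hx2.le hcase.le (by norm_num)) (Real.rpow_nonneg hx2.le _)
          _ = r := hrd.symm
      have hr34 : r ^ ((3:ℝ)/4) = a ^ ((1:ℝ)/4) * l ^ ((1:ℝ)/2) := by
        rw [hrd, mul_rpow_rpow hx2 hlpos]
        norm_num
      have hrm32 : r ^ (-((3:ℝ)/2)) = a ^ (-((1:ℝ)/2)) * l ^ (-(1:ℝ)) := by
        rw [hrd, mul_rpow_rpow hx2 hlpos]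
        norm_num
      have hrm34 : r ^ (-((3:ℝ)/4)) = a ^ (-((1:ℝ)/4)) * l ^ (-((1:ℝ)/2)) := by
        rw [hrd, mul_rpow_rpow hx2 hlpos]
        norm_num
      clear_value r
      clear hrd
      set κ : ℝ := a ^ ((1:ℝ)/2) + a ^ ((1:ℝ)/4) * r ^ ((1:ℝ)/4) with hκd
      set M : ℝ := a ^ ((3:ℝ)/2) * r ^ (-((3:ℝ)/2)) + a ^ ((3:ℝ)/4) * r ^ (-((3:ℝ)/4)) with hMd
      have hκ : 0 ≤ κ := add_nonneg (Real.rpow_nonneg hx2.le _)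
        (mul_nonneg (Real.rpow_nonneg hx2.le _) (Real.rpow_nonneg hr.le _))
      have hM : 0 ≤ M := add_nonneg
        (mul_nonneg (Real.rpow_nonneg hx2.le _) (Real.rpow_nonneg hr.le _))
        (mul_nonneg (Real.rpow_nonneg hx2.le _) (Real.rpow_nonneg hr.le _))
      have hnear : ∀ y ∈ H, Real.sqrt ((x.1 - y.1) ^ 2 + (x.2 - y.2) ^ 2) < r →
          G x y ≤ κ * Real.sqrt ((x.1 - y.1) ^ 2 + (x.2 - y.2) ^ 2) ^ (-((1:ℝ)/2)) := by
        intro y hy hlt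
        set s : ℝ := Real.sqrt ((x.1 - y.1) ^ 2 + (x.2 - y.2) ^ 2) with hs
        have hs0 : 0 ≤ s := Real.sqrt_nonneg _
        have h1 := G_quarter hx hy
        rw [← hs, ← ha] at h1
        have h2 := neg_quarter_le hs0 hlt.le
        have h3 : a ^ ((1:ℝ)/4) * s ^ (-((1:ℝ)/4))
            ≤ a ^ ((1:ℝ)/4) * (r ^ ((1:ℝ)/4) * s ^ (-((1:ℝ)/2))) :=
          mul_le_mul_of_nonneg_left h2 (Real.rpow_nonneg hx2.le _)
        have expand : (a ^ ((1:ℝ)/2) + a ^ ((1:ℝ)/4) * r ^ ((1:ℝ)/4)) * s ^ (-((1:ℝ)/2))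
            = a ^ ((1:ℝ)/2) * s ^ (-((1:ℝ)/2))
              + a ^ ((1:ℝ)/4) * (r ^ ((1:ℝ)/4) * s ^ (-((1:ℝ)/2))) := by ring
        rw [hκd, expand]
        linarith only [h1, h3]
      have hfar : ∀ y ∈ H, r ≤ Real.sqrt ((x.1 - y.1) ^ 2 + (x.2 - y.2) ^ 2) →
          G x y ≤ M := by
        intro y hy hge
        set s : ℝ := Real.sqrt ((x.1 - y.1) ^ 2 + (x.2 - y.2) ^ 2) with hs
        have h1 := G_threequarter hx hy
        rw [← hs, ← ha] at h1
        have h2 : s ^ (-((3:ℝ)/2)) ≤ r ^ (-((3:ℝ)/2)) :=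
          Real.rpow_le_rpow_of_nonpos hr hge (by norm_num)
        have h3 : s ^ (-((3:ℝ)/4)) ≤ r ^ (-((3:ℝ)/4)) :=
          Real.rpow_le_rpow_of_nonpos hr hge (by norm_num)
        have h4 : a ^ ((3:ℝ)/2) * s ^ (-((3:ℝ)/2)) ≤ a ^ ((3:ℝ)/2) * r ^ (-((3:ℝ)/2)) :=
          mul_le_mul_of_nonneg_left h2 (Real.rpow_nonneg hx2.le _)
        have h5 : a ^ ((3:ℝ)/4) * s ^ (-((3:ℝ)/4)) ≤ a ^ ((3:ℝ)/4) * r ^ (-((3:ℝ)/4)) :=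
          mul_le_mul_of_nonneg_left h3 (Real.rpow_nonneg hx2.le _)
        rw [hMd]
        linarith only [h1, h4, h5]
      have hmaster := master hω hx hr hκ hM hnear hfar
      rw [← hN1d, ← hN2d] at hmaster
      -- algebra
      have hκb : κ ≤ 2 * (a ^ ((1:ℝ)/4) * r ^ ((1:ℝ)/4)) := by
        have h1 : a ^ ((1:ℝ)/2) = a ^ ((1:ℝ)/4) * a ^ ((1:ℝ)/4) :=
          (rpow_mul_rpow_self hx2 (by norm_num : (1:ℝ)/4 + 1/4 = 1/2)).symm
        have h2 : a ^ ((1:ℝ)/4) * a ^ ((1:ℝ)/4) ≤ a ^ ((1:ℝ)/4) * r ^ ((1:ℝ)/4) :=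
          mul_le_mul_of_nonneg_left (Real.rpow_le_rpow hx2.le haler (by norm_num))
            (Real.rpow_nonneg hx2.le _)
        rw [hκd, h1]
        linarith
      have hr14half : r ^ ((1:ℝ)/4) * r ^ ((1:ℝ)/2) = r ^ ((3:ℝ)/4) :=
        rpow_mul_rpow_self hr (by norm_num)
      have hnear_val : κ * (2 * π * r) ^ ((1:ℝ)/2) * N2 ≤ 6 * T := by
        have h1 : κ * (2 * π * r) ^ ((1:ℝ)/2)
            ≤ (2 * (a ^ ((1:ℝ)/4) * r ^ ((1:ℝ)/4))) * (3 * r ^ ((1:ℝ)/2)) :=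
          mul_le_mul hκb (sqrt_2pir_le hr) (by positivity) (by positivity)
        calc κ * (2 * π * r) ^ ((1:ℝ)/2) * N2
            ≤ (2 * (a ^ ((1:ℝ)/4) * r ^ ((1:ℝ)/4))) * (3 * r ^ ((1:ℝ)/2)) * N2 :=
              mul_le_mul_of_nonneg_right h1 hN2pos.le
          _ = 6 * (a ^ ((1:ℝ)/4) * ((r ^ ((1:ℝ)/4) * r ^ ((1:ℝ)/2)) * N2)) := by ring
          _ = 6 * (a ^ ((1:ℝ)/4) * ((a ^ ((1:ℝ)/4) * l ^ ((1:ℝ)/2)) * N2)) := by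
              rw [hr14half, hr34]
          _ = 6 * ((a ^ ((1:ℝ)/4) * a ^ ((1:ℝ)/4)) * (l ^ ((1:ℝ)/2) * N2)) := by ring
          _ = 6 * T := by
              rw [rpow_mul_rpow_self hx2 (by norm_num : (1:ℝ)/4 + 1/4 = 1/2), idlhalf, hT]
      have hfar_val : M * N1 ≤ 2 * T := by
        have term1 : a ^ ((3:ℝ)/2) * r ^ (-((3:ℝ)/2)) * N1 = a * N2 := by
          rw [hrm32]
          have e1 : a ^ ((3:ℝ)/2) * a ^ (-((1:ℝ)/2)) = a :=  by
            rw [rpow_mul_rpow_self hx2 (by norm_num : (3:ℝ)/2 + -(1/2) = 1), Real.rpow_one]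
          have e2 : l ^ (-(1:ℝ)) * N1 = N2 := by
            rw [Real.rpow_neg_one, hl]
            field_simp
          calc a ^ ((3:ℝ)/2) * (a ^ (-((1:ℝ)/2)) * l ^ (-(1:ℝ))) * N1
              = (a ^ ((3:ℝ)/2) * a ^ (-((1:ℝ)/2))) * (l ^ (-(1:ℝ)) * N1) := by ring
            _ = a * N2 := by rw [e1, e2]
        have term2 : a ^ ((3:ℝ)/4) * r ^ (-((3:ℝ)/4)) * N1
            = a ^ ((1:ℝ)/2) * (N1 ^ ((1:ℝ)/2) * N2 ^ ((1:ℝ)/2)) := by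
          rw [hrm34]
          have e1 : a ^ ((3:ℝ)/4) * a ^ (-((1:ℝ)/4)) = a ^ ((1:ℝ)/2) := by
            rw [rpow_mul_rpow_self hx2 (by norm_num : (3:ℝ)/4 + -(1/4) = 1/2)]
          calc a ^ ((3:ℝ)/4) * (a ^ (-((1:ℝ)/4)) * l ^ (-((1:ℝ)/2))) * N1
              = (a ^ ((3:ℝ)/4) * a ^ (-((1:ℝ)/4))) * (l ^ (-((1:ℝ)/2)) * N1) := by ring
            _ = a ^ ((1:ℝ)/2) * (N1 ^ ((1:ℝ)/2) * N2 ^ ((1:ℝ)/2)) := by rw [e1, idlneg]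
        have haN2 : a * N2 ≤ T := by
          have h1 : (a * N2) ^ ((1:ℝ)/2) ≤ N1 ^ ((1:ℝ)/2) := by
            apply Real.rpow_le_rpow (by positivity) _ (by norm_num)
            rw [hl] at hcase
            exact ((lt_div_iff₀ hN2pos).1 hcase).le
          have h2 : (a * N2) ^ ((1:ℝ)/2) = a ^ ((1:ℝ)/2) * N2 ^ ((1:ℝ)/2) :=
            Real.mul_rpow hx2.le hN2pos.le
          have h3 : a * N2 = (a ^ ((1:ℝ)/2) * N2 ^ ((1:ℝ)/2)) * (a ^ ((1:ℝ)/2) * N2 ^ ((1:ℝ)/2)) := by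
            rw [show (a ^ ((1:ℝ)/2) * N2 ^ ((1:ℝ)/2)) * (a ^ ((1:ℝ)/2) * N2 ^ ((1:ℝ)/2))
              = (a ^ ((1:ℝ)/2) * a ^ ((1:ℝ)/2)) * (N2 ^ ((1:ℝ)/2) * N2 ^ ((1:ℝ)/2)) by ring,
              half_mul_self hx2, half_mul_self hN2pos]
          rw [h2] at h1
          rw [hT, h3]
          nlinarith [Real.rpow_nonneg hx2.le ((1:ℝ)/2), Real.rpow_nonneg hN2pos.le ((1:ℝ)/2),
            mul_nonneg (Real.rpow_nonneg hx2.le ((1:ℝ)/2)) (Real.rpow_nonneg hN2pos.le ((1:ℝ)/2))]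
        calc M * N1 = a ^ ((3:ℝ)/2) * r ^ (-((3:ℝ)/2)) * N1
              + a ^ ((3:ℝ)/4) * r ^ (-((3:ℝ)/4)) * N1 := by rw [hMd]; ring
          _ = a * N2 + a ^ ((1:ℝ)/2) * (N1 ^ ((1:ℝ)/2) * N2 ^ ((1:ℝ)/2)) := by
              rw [term1, term2]
          _ ≤ T + T := by
              apply add_le_add haN2
              rw [hT]
          _ = 2 * T := by ring
      calc |Gpot ω x| ≤ κ * (2 * π * r) ^ ((1:ℝ)/2) * N2 + M * N1 := hmaster
        _ ≤ 6 * T + 2 * T := add_le_add hnear_val hfar_val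
        _ = 8 * T := by ring
end
end
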